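/- If f, g : [a,b] → ℝ are continuous with sup norm distance ‖f - g‖_∞ < ε, then their monotone reorderings satisfy ‖f^# - g^#‖_∞ < 2ε on (0, b-a]. -/

import Mathlib

open MeasureTheory Set

/-- The monotone reordering of `f : [a,b] → ℝ`. -/
noncomputable def monRe (f : ℝ → ℝ) (a b : ℝ) (t : ℝ) : ℝ :=
  sInf { s : ℝ | t ≤ (volume { x ∈ Icc a b | f x ≤ s }).toReal }

/-! The reordering is `1`-Lipschitz for the sup norm: if `f ≤ g + c` on `[a,b]`, every sublevel set
of `g` at height `s` lies in the sublevel set of `f` at height `s + c`, so the infimum defining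
`monRe f` is at most `c` above the one defining `monRe g`. -/

section

variable {f g : ℝ → ℝ} {a b t : ℝ}

lemma bddBelow_monRe_set (hf : BddBelow (f '' Icc a b)) (ht : 0 < t) :
    BddBelow {s : ℝ | t ≤ (volume {x ∈ Icc a b | f x ≤ s}).toReal} := by
  obtain ⟨m, hm⟩ := hf
  refine ⟨m, fun s hs => ?_⟩
  by_contra! hsm
  have hempty : {x ∈ Icc a b | f x ≤ s} = ∅ :=
    eq_empty_of_forall_notMem fun x ⟨hx, hfx⟩ => (hsm.trans_le (hm ⟨x, hx, rfl⟩)).not_ge hfx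
  rw [mem_ofPred_eq, hempty, measure_empty, ENNReal.toReal_zero] at hs
  exact ht.not_ge hs

lemma monRe_set_nonempty (hf : BddAbove (f '' Icc a b)) (ht : t ≤ b - a) :
    {s : ℝ | t ≤ (volume {x ∈ Icc a b | f x ≤ s}).toReal}.Nonempty := by
  obtain ⟨M, hM⟩ := hf
  refine ⟨M, ?_⟩
  have hlevel : {x ∈ Icc a b | f x ≤ M} = Icc a b :=
    sep_eq_self_iff_mem_true.2 fun x hx => hM ⟨x, hx, rfl⟩
  rw [mem_ofPred_eq, hlevel, Real.volume_Icc, ENNReal.toReal_ofReal']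
  exact ht.trans (le_max_left _ _)

lemma monRe_le_add_of_le_add (hf : BddBelow (f '' Icc a b)) (hg : BddAbove (g '' Icc a b))
    (ht : t ∈ Ioc 0 (b - a)) {c : ℝ} (hfg : ∀ x ∈ Icc a b, f x ≤ g x + c) :
    monRe f a b t ≤ monRe g a b t + c := by
  rw [← sub_le_iff_le_add]
  refine le_csInf (monRe_set_nonempty hg ht.2) fun s hs => sub_le_iff_le_add.2 ?_
  refine csInf_le (bddBelow_monRe_set hf ht.1) (hs.trans (ENNReal.toReal_mono ?_ ?_))
  · exact ne_top_of_le_ne_top measure_Icc_lt_top.ne (measure_mono (sep_subset _ _))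
  · exact measure_mono fun x ⟨hx, hgx⟩ => ⟨hx, (hfg x hx).trans (by linarith)⟩

lemma abs_monRe_sub_le (hf : ContinuousOn f (Icc a b)) (hg : ContinuousOn g (Icc a b))
    (ht : t ∈ Ioc 0 (b - a)) {ε : ℝ} (hfg : ∀ x ∈ Icc a b, |f x - g x| ≤ ε) :
    |monRe f a b t - monRe g a b t| ≤ ε := by
  have hfg' : ∀ x ∈ Icc a b, f x ≤ g x + ε ∧ g x ≤ f x + ε := fun x hx => by
    have := abs_le.1 (hfg x hx)
    constructor <;> linarith
  rw [abs_sub_le_iff, sub_le_iff_le_add', sub_le_iff_le_add']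
  constructor
  · exact monRe_le_add_of_le_add (isCompact_Icc.bddBelow_image hf)
      (isCompact_Icc.bddAbove_image hg) ht fun x hx => (hfg' x hx).1
  · exact monRe_le_add_of_le_add (isCompact_Icc.bddBelow_image hg)
      (isCompact_Icc.bddAbove_image hf) ht fun x hx => (hfg' x hx).2

end

theorem monRe_max_norm_bound_general (f g : ℝ → ℝ) (a b : ℝ)
    (hf : ContinuousOn f (Icc a b)) (hg : ContinuousOn g (Icc a b))
    (ε : ℝ) (hε : 0 < ε) (hfg : ∀ x ∈ Icc a b, |f x - g x| < ε) :
    ∀ t ∈ Ioc 0 (b - a), |monRe f a b t - monRe g a b t| < 2 * ε := fun t ht =>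
  (abs_monRe_sub_le hf hg ht fun x hx => (hfg x hx).le).trans_lt (by linarith)

theorem monRe_max_norm_bound (f g : ℝ → ℝ) (a b : ℝ) (hab : a ≤ b)
    (hf : ContinuousOn f (Icc a b)) (hg : ContinuousOn g (Icc a b))
    (ε : ℝ) (hε : 0 < ε) (hfg : ∀ x ∈ Icc a b, |f x - g x| < ε) :
    ∀ t ∈ Ioc 0 (b - a), |monRe f a b t - monRe g a b t| < 2 * ε :=
  monRe_max_norm_bound_general f g a b hf hg ε hε hfg
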